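/- Let D be a triangulated category with shift [1], and let (X, Y) be a t-structure on D with heart H = X ∩ Y[1]. If (X', Y') is a t-structure on D with X[1] ⊆ X' ⊆ X, then the pair (T, F) with T = H ∩ X' and F = H ∩ Y' is a torsion pair in the abelian category H. -/

import Mathlib

open CategoryTheory Category Limits Pretriangulated

namespace Paper

variable {C : Type*} [Category C] [HasZeroObject C] [Preadditive C] [HasShift C ℤ]
  [∀ n : ℤ, (shiftFunctor C n).Additive] [Pretriangulated C]

/-- The shift of a class of objects: `S⟦n⟧` (closed under isomorphism). -/
def shiftSet (S : Set C) (n : ℤ) : Set C := {X | ∃ A ∈ S, Nonempty (X ≅ A⟦n⟧)}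

/-- `S[≤ n] = { S⟦i⟧ ∣ S ∈ S, i ≤ n }`. -/
def shiftsLe (S : Set C) (n : ℤ) : Set C := {X | ∃ A ∈ S, ∃ i : ℤ, i ≤ n ∧ Nonempty (X ≅ A⟦i⟧)}

/-- `S[≥ n] = { S⟦i⟧ ∣ S ∈ S, i ≥ n }`. -/
def shiftsGe (S : Set C) (n : ℤ) : Set C := {X | ∃ A ∈ S, ∃ i : ℤ, n ≤ i ∧ Nonempty (X ≅ A⟦i⟧)}

/-- `X * Y`: objects `D` fitting in a distinguished triangle `X → D → Y → X⟦1⟧`. -/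
def star (X Y : Set C) : Set C :=
  {D | ∃ (A B : C) (f : A ⟶ D) (g : D ⟶ B) (h : B ⟶ A⟦(1 : ℤ)⟧),
    A ∈ X ∧ B ∈ Y ∧ Triangle.mk f g h ∈ distTriang C}

/-- Right perpendicular class. -/
def rightPerp (S : Set C) : Set C := {D | ∀ A ∈ S, ∀ f : A ⟶ D, f = 0}

/-- Left perpendicular class. -/
def leftPerp (S : Set C) : Set C := {D | ∀ B ∈ S, ∀ f : D ⟶ B, f = 0}

/-- A t-structure `(X, Y)` on a (pre)triangulated category. -/
structure IsTStructure (X Y : Set C) : Prop where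
  rp : rightPerp X = Y
  lp : leftPerp Y = X
  dec : ∀ D : C, D ∈ star X Y
  shift : shiftSet X 1 ⊆ X

/-- The heart `H = X ∩ Y⟦1⟧` of a t-structure. -/
def heart (X Y : Set C) : Set C := X ∩ shiftSet Y 1

/-- The extension closure of a class of objects. -/
inductive ExtClosure (S : Set C) : C → Prop
  | of {A : C} (h : A ∈ S) : ExtClosure S A
  | iso {A B : C} (e : A ≅ B) (h : ExtClosure S A) : ExtClosure S B
  | ext {A E B : C} (f : A ⟶ E) (g : E ⟶ B) (h : B ⟶ A⟦(1 : ℤ)⟧)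
      (hT : Triangle.mk f g h ∈ distTriang C)
      (hA : ExtClosure S A) (hB : ExtClosure S B) : ExtClosure S E

/-- The extension closure, as a set. -/
def extClosure (S : Set C) : Set C := {X | ExtClosure S X}

/-- A torsion pair `(T, F)` in the heart of a t-structure `(X, Y)`; short exact sequences in
the heart correspond to distinguished triangles with three terms in the heart. -/
structure IsHeartTorsionPair (X Y T F : Set C) : Prop where
  subT : T ⊆ heart X Y
  subF : F ⊆ heart X Y
  rp : heart X Y ∩ rightPerp T = F
  lp : heart X Y ∩ leftPerp F = T
  dec : ∀ H₀ ∈ heart X Y, H₀ ∈ star T F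

/-- A bounded t-structure. -/
def IsBounded (X Y : Set C) : Prop :=
  (∀ D : C, ∃ n : ℤ, D ∈ shiftSet X n) ∧ (∀ D : C, ∃ n : ℤ, D ∈ shiftSet Y n)

/-- A simple object of the heart of a t-structure: a nonzero object admitting no proper
subobjects in the heart (expressed via distinguished triangles with entries in the heart). -/
def IsSimpleInHeart (X Y : Set C) (A : C) : Prop :=
  A ∈ heart X Y ∧ ¬ IsZero A ∧
  ∀ (A' B : C) (f : A' ⟶ A) (g : A ⟶ B) (h : B ⟶ A'⟦(1 : ℤ)⟧),
    Triangle.mk f g h ∈ (distTriang C) → A' ∈ heart X Y → B ∈ heart X Y →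
    IsZero A' ∨ IsZero B

/-- An algebraic t-structure: a bounded t-structure whose heart is a length category with
finitely many simple objects, i.e. the heart is the extension closure of finitely many
simple objects. -/
def IsAlgebraic (X Y : Set C) : Prop :=
  IsTStructure X Y ∧ IsBounded X Y ∧
  ∃ (t : ℕ) (G : Fin t → C), (∀ i, IsSimpleInHeart X Y (G i)) ∧
    heart X Y = extClosure (Set.range G)

/-- Thick closure: the smallest triangulated subcategory closed under direct summands. -/
inductive ThickClosure (S : Set C) : C → Prop
  | of {A : C} (h : A ∈ S) : ThickClosure S A
  | iso {A B : C} (e : A ≅ B) (h : ThickClosure S A) : ThickClosure S B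
  | shift {A : C} (n : ℤ) (h : ThickClosure S A) : ThickClosure S (A⟦n⟧)
  | ext {A E B : C} (f : A ⟶ E) (g : E ⟶ B) (h : B ⟶ A⟦(1 : ℤ)⟧)
      (hT : Triangle.mk f g h ∈ distTriang C)
      (hA : ThickClosure S A) (hB : ThickClosure S B) : ThickClosure S E
  | retract {A B : C} (s : A ⟶ B) (r : B ⟶ A) (hsr : s ≫ r = 𝟙 A)
      (h : ThickClosure S B) : ThickClosure S A

/-- Thick closure, as a set. -/
def thickClosure (S : Set C) : Set C := {X | ThickClosure S X}

/-- `Hom(S, T⟦i⟧) = 0` for all `i > 0`. -/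
def vanishHomPos (S T : Set C) : Prop :=
  ∀ A ∈ S, ∀ B ∈ T, ∀ i : ℤ, 0 < i → ∀ f : A ⟶ B⟦i⟧, f = 0

/-- A silting subcategory `S` of the (thick) subcategory `P`. -/
def IsSiltingIn (P S : Set C) : Prop :=
  S ⊆ P ∧ thickClosure S = P ∧ vanishHomPos S S

/-- The aisle `X_S = (S[≤ 0])^⊥` of the t-structure associated to a silting subcategory. -/
def siltXs (S : Set C) : Set C := rightPerp (shiftsLe S 0)

/-- The coaisle `Y_S = (S[≥ 0])^⊥` of the t-structure associated to a silting subcategory. -/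
def siltYs (S : Set C) : Set C := rightPerp (shiftsGe S 0)

/-- A class of objects closed under isomorphisms, finite direct sums and direct summands. -/
def IsAddClosed [HasBinaryBiproducts C] (S : Set C) : Prop :=
  (∀ A B : C, (A ≅ B) → A ∈ S → B ∈ S) ∧
  (∀ A B : C, A ∈ S → B ∈ S → (A ⊞ B) ∈ S) ∧
  (∀ A B : C, (∃ (s : A ⟶ B) (r : B ⟶ A), s ≫ r = 𝟙 A) → B ∈ S → A ∈ S)

/-- Silting-discreteness (relative to the subcategory `P` of compact objects, e.g.
`K^b(proj Λ)`): for every silting subcategory `S` of `P` there are only finitely many silting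
subcategories `T` with `S ≥ T ≥ S⟦1⟧`. -/
def IsSiltingDiscrete [HasBinaryBiproducts C] (P : Set C) : Prop :=
  ∀ S : Set C, IsSiltingIn P S → IsAddClosed S →
    {T : Set C | IsSiltingIn P T ∧ IsAddClosed T ∧
      vanishHomPos S T ∧ vanishHomPos T (shiftSet S 1)}.Finite

/-- A t-structure on a full (pre)triangulated subcategory `B` of the ambient category. -/
structure IsTStructureOn (B X Y : Set C) : Prop where
  subX : X ⊆ B
  subY : Y ⊆ B
  rp : B ∩ rightPerp X = Y
  lp : B ∩ leftPerp Y = X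
  dec : ∀ D ∈ B, D ∈ star X Y
  shift : shiftSet X 1 ⊆ X

/-! The `(X', Y')`-truncation triangle `A → H → B → A⟦1⟧` of an object `H` of the heart already
lies in the heart, because `X = ⊥Y` and `Y⟦1⟧ = (X⟦1⟧)^⊥` are closed under extensions:
`B ∈ X` by the rotated triangle `H → B → A⟦1⟧`, and `X⟦1⟧ ⊆ X'` gives `B ∈ Y' ⊆ Y⟦1⟧`,
then `A ∈ Y⟦1⟧` by the triangle `B⟦-1⟧ → A → H`. It is therefore the torsion sequence of `H`.
If `H` is right orthogonal to the torsion part, then `A → H` vanishes, and every map from `X'`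
to `H`, which factors through `A → H` since `B ∈ X'^⊥`, vanishes too; dually for `F`. -/

omit [HasZeroObject C] [HasShift C ℤ] [∀ n : ℤ, (shiftFunctor C n).Additive] [Pretriangulated C] in
lemma rightPerp_anti {S S' : Set C} (hS : S ⊆ S') : rightPerp S' ⊆ rightPerp S :=
  fun _ hD A hA => hD A (hS hA)

omit [HasZeroObject C] [HasShift C ℤ] [∀ n : ℤ, (shiftFunctor C n).Additive] [Pretriangulated C] in
lemma leftPerp_anti {S S' : Set C} (hS : S ⊆ S') : leftPerp S' ⊆ leftPerp S :=
  fun _ hD B hB => hD B (hS hB)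

omit [HasZeroObject C] [Preadditive C] [∀ n : ℤ, (shiftFunctor C n).Additive]
  [Pretriangulated C] in
lemma shiftSet_mono {S S' : Set C} (hS : S ⊆ S') (n : ℤ) : shiftSet S n ⊆ shiftSet S' n :=
  fun _ ⟨A, hA, e⟩ => ⟨A, hS hA, e⟩

section Triangles

variable {T : Triangle C} (hT : T ∈ distTriang C) {S : Set C}
include hT

lemma obj₂_mem_rightPerp (h₁ : T.obj₁ ∈ rightPerp S) (h₃ : T.obj₃ ∈ rightPerp S) :
    T.obj₂ ∈ rightPerp S := by
  intro A hA f
  obtain ⟨g, rfl⟩ := Triangle.coyoneda_exact₂ T hT f (h₃ A hA _)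
  rw [h₁ A hA g, zero_comp]

lemma obj₂_mem_leftPerp (h₁ : T.obj₁ ∈ leftPerp S) (h₃ : T.obj₃ ∈ leftPerp S) :
    T.obj₂ ∈ leftPerp S := by
  intro B hB f
  obtain ⟨g, rfl⟩ := Triangle.yoneda_exact₂ T hT f (h₁ B hB _)
  rw [h₃ B hB g, comp_zero]

lemma obj₂_mem_rightPerp_of_mor₁_eq_zero (h₀ : T.mor₁ = 0) (h₃ : T.obj₃ ∈ rightPerp S) :
    T.obj₂ ∈ rightPerp S := by
  intro A hA f
  obtain ⟨g, rfl⟩ := Triangle.coyoneda_exact₂ T hT f (h₃ A hA _)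
  rw [h₀, comp_zero]

lemma obj₂_mem_leftPerp_of_mor₂_eq_zero (h₀ : T.mor₂ = 0) (h₁ : T.obj₁ ∈ leftPerp S) :
    T.obj₂ ∈ leftPerp S := by
  intro B hB f
  obtain ⟨g, rfl⟩ := Triangle.yoneda_exact₂ T hT f (h₁ B hB _)
  rw [h₀, zero_comp]

end Triangles

omit [HasZeroObject C] [Pretriangulated C] in
lemma shift_neg_mem_rightPerp {S : Set C} {n : ℤ} {D : C} (hD : D ∈ rightPerp (shiftSet S n)) :
    D⟦-n⟧ ∈ rightPerp S := by
  intro A hA g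
  let e := (shiftFunctorCompIsoId C (-n) n (neg_add_cancel n)).app D
  have h₀ : g⟦n⟧' ≫ e.hom = 0 := hD _ ⟨A, hA, ⟨Iso.refl _⟩⟩ _
  rwa [Preadditive.IsIso.comp_right_eq_zero, Functor.map_eq_zero_iff] at h₀

omit [HasZeroObject C] [Pretriangulated C] in
lemma shiftSet_rightPerp (S : Set C) (n : ℤ) :
    shiftSet (rightPerp S) n = rightPerp (shiftSet S n) := by
  apply Set.Subset.antisymm
  · rintro D ⟨B, hB, ⟨eD⟩⟩ P ⟨A, hA, ⟨eP⟩⟩ f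
    obtain ⟨g, hg⟩ := (shiftFunctor C n).map_surjective (eP.inv ≫ f ≫ eD.hom)
    rwa [hB A hA g, Functor.map_zero, eq_comm, Preadditive.IsIso.comp_left_eq_zero,
      Preadditive.IsIso.comp_right_eq_zero] at hg
  · intro D hD
    exact ⟨D⟦-n⟧, shift_neg_mem_rightPerp hD,
      ⟨((shiftFunctorCompIsoId C (-n) n (neg_add_cancel n)).app D).symm⟩⟩

lemma IsTStructure.shiftSet_one_eq_rightPerp {X Y : Set C} (h : IsTStructure X Y) :
    shiftSet Y 1 = rightPerp (shiftSet X 1) :=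
  h.rp ▸ shiftSet_rightPerp X 1

lemma IsTStructure.mem_star_heart_inter {X Y X' Y' : Set C}
    (h : IsTStructure X Y) (h' : IsTStructure X' Y')
    (h1 : shiftSet X 1 ⊆ X') (h2 : X' ⊆ X) {H : C} (hH : H ∈ heart X Y) :
    H ∈ star (heart X Y ∩ X') (heart X Y ∩ Y') := by
  obtain ⟨A, B, f, g, k, hA, hB, hT⟩ := h'.dec H
  have hY' : Y' ⊆ shiftSet Y 1 := by
    rw [h.shiftSet_one_eq_rightPerp, ← h'.rp]
    exact rightPerp_anti h1
  have hBX : B ∈ X := by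
    have hA₁ : A⟦(1 : ℤ)⟧ ∈ X := h.shift ⟨A, h2 hA, ⟨Iso.refl _⟩⟩
    rw [← h.lp] at hA₁ hH ⊢
    exact obj₂_mem_leftPerp (rot_of_distTriang _ hT) hH.1 hA₁
  have hAY : A ∈ shiftSet Y 1 := by
    have hBshift : B⟦-(1 : ℤ)⟧ ∈ rightPerp (shiftSet X 1) := by
      refine shift_neg_mem_rightPerp (rightPerp_anti ?_ (h'.rp ▸ hB))
      exact (shiftSet_mono h.shift 1).trans h1
    have hH₁ := hH.2
    rw [h.shiftSet_one_eq_rightPerp] at hH₁ ⊢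
    exact obj₂_mem_rightPerp (inv_rot_of_distTriang _ hT) hBshift hH₁
  exact ⟨A, B, f, g, k, ⟨⟨h2 hA, hAY⟩, hA⟩, ⟨⟨hBX, hY' hB⟩, hB⟩, hT⟩

/-- For a t-structure `(X, Y)` with heart `H` and an intermediate t-structure
`(X', Y')` with `X⟦1⟧ ⊆ X' ⊆ X`, the pair `(H ∩ X', H ∩ Y')` is a torsion pair in `H`. -/
theorem statement0 (X Y X' Y' : Set C)
    (h : IsTStructure X Y) (h' : IsTStructure X' Y')
    (h1 : shiftSet X 1 ⊆ X') (h2 : X' ⊆ X) :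
    IsHeartTorsionPair X Y (heart X Y ∩ X') (heart X Y ∩ Y') := by
  have hstar := fun H (hH : H ∈ heart X Y) => h.mem_star_heart_inter h' h1 h2 hH
  refine ⟨Set.inter_subset_left, Set.inter_subset_left, ?_, ?_, hstar⟩
  · refine Set.Subset.antisymm (fun H ⟨hH, hHT⟩ => ⟨hH, ?_⟩)
      (fun H ⟨hH, hHF⟩ => ⟨hH, rightPerp_anti Set.inter_subset_right (h'.rp ▸ hHF)⟩)
    obtain ⟨A, B, f, g, k, hA, hB, hT⟩ := hstar H hH
    rw [← h'.rp] at hB ⊢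
    exact obj₂_mem_rightPerp_of_mor₁_eq_zero hT (hHT A hA f) hB.2
  · refine Set.Subset.antisymm (fun H ⟨hH, hHF⟩ => ⟨hH, ?_⟩)
      (fun H ⟨hH, hHT⟩ => ⟨hH, leftPerp_anti Set.inter_subset_right (h'.lp ▸ hHT)⟩)
    obtain ⟨A, B, f, g, k, hA, hB, hT⟩ := hstar H hH
    rw [← h'.lp] at hA ⊢
    exact obj₂_mem_leftPerp_of_mor₂_eq_zero hT (hHF B hB g) hA.2

end Paper
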